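/- Let N, L be positive integers, u_1,…,u_L ∈ ℂ^N nonzero vectors, y_1,…,y_L ≥ 0, γ > 0, μ ≥ 0. Then there exists a minimum step size ᾱ > 0 with the following property: for every sequence (Q_k)_{k≥0} of N×N complex Hermitian positive semidefinite matrices and every sequence of step sizes α_k ∈ (0, ᾱ) such that, for each k, Q_{k+1} minimizes ‖Q − (Q_k − α_k S(Q_k))‖_F over all Hermitian positive semidefinite matrices Q (where S(Q_k) = Σ_{ℓ=1}^L [1/λ_ℓ(Q_k) − y_ℓ/λ_ℓ(Q_k)²] u_ℓ u_ℓ* + μ I), the sequence of objective values J_μ(Q_k) is monotonically nonincreasing: J_μ(Q_{k+1}) ≤ J_μ(Q_k) for all k. -/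

import Mathlib

/-!
Under the Frobenius inner product `⟪A, B⟫ = Re tr(Aᴴ B)` the matrix `S(Q)` is the gradient of
`J_μ` at `Q`, and on the PSD cone every `λ_ℓ` is at least `c_ℓ = γ⁻¹‖u_ℓ‖²`. For `t, t' ≥ c` the
function `log t + y / t` lies below its tangent at `t` plus `(y / c³)(t' - t)²`, and
`|λ_ℓ(Q') - λ_ℓ(Q)| ≤ ‖u_ℓ‖² ‖Q' - Q‖_F` by Cauchy–Schwarz, so on the cone
`J_μ(Q') ≤ J_μ(Q) + ⟪S(Q), Q' - Q⟫ + C ‖Q' - Q‖_F²` with `C = Σ_ℓ y_ℓ ‖u_ℓ‖⁴ / c_ℓ³`.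
The projection onto the convex cone gives `α ⟪S(Q_k), Q_{k+1} - Q_k⟫ ≤ -‖Q_{k+1} - Q_k‖_F²`,
hence every step size below `1 / (C + 1)` decreases `J_μ`.
-/

open Matrix BigOperators
open scoped ComplexOrder

noncomputable section

namespace MmW

variable {N L : ℕ}

/-- Squared Euclidean norm of a complex vector. -/
def nsq (v : Fin N → ℂ) : ℝ := ∑ i, Complex.normSq (v i)

/-- The rank-one matrix `v v*`. -/
def outer (v : Fin N → ℂ) : Matrix (Fin N) (Fin N) ℂ := Matrix.vecMulVec v (star v)

/-- `λ_ℓ(Q) = u_ℓ* (Q + γ⁻¹ I) u_ℓ` (real part; it is real for Hermitian `Q`). -/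
def lam (u : Fin L → Fin N → ℂ) (γ : ℝ) (Q : Matrix (Fin N) (Fin N) ℂ) (ℓ : Fin L) : ℝ :=
  (star (u ℓ) ⬝ᵥ ((Q + ((γ : ℂ))⁻¹ • (1 : Matrix (Fin N) (Fin N) ℂ)) *ᵥ u ℓ)).re

/-- The regularized ML objective `J_μ(Q) = Σ_ℓ [log λ_ℓ(Q) + y_ℓ/λ_ℓ(Q)] + μ·Tr(Q)`. -/
def Jmu (u : Fin L → Fin N → ℂ) (y : Fin L → ℝ) (γ μ : ℝ)
    (Q : Matrix (Fin N) (Fin N) ℂ) : ℝ :=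
  (∑ ℓ, (Real.log (lam u γ Q ℓ) + y ℓ / lam u γ Q ℓ)) + μ * Q.trace.re

/-- The `(L+1)×(L+1)` real matrix `A`, indexed by `0,…,L`:
`A_{00} = N`, `A_{0j} = ‖u_j‖²`, `A_{ℓ0} = ‖u_ℓ‖²`, `A_{ℓj} = |u_ℓ* u_j|²`. -/
def Amat (N : ℕ) (u : Fin L → Fin N → ℂ) : Matrix (Fin (L+1)) (Fin (L+1)) ℝ :=
  fun i j =>
    Fin.cases
      (Fin.cases (N : ℝ) (fun j' => nsq (u j')) j)
      (fun i' => Fin.cases (nsq (u i')) (fun j' => Complex.normSq (star (u i') ⬝ᵥ u j')) j)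
      i

/-- The separable objective
`f(z) = μ z_0 + Σ_ℓ [log(z_ℓ + γ⁻¹‖u_ℓ‖²) + y_ℓ/(z_ℓ + γ⁻¹‖u_ℓ‖²)]`. -/
def fobj (u : Fin L → Fin N → ℂ) (y : Fin L → ℝ) (γ μ : ℝ) (z : Fin (L+1) → ℝ) : ℝ :=
  μ * z 0 + ∑ ℓ, (Real.log (z ℓ.succ + γ⁻¹ * nsq (u ℓ)) + y ℓ / (z ℓ.succ + γ⁻¹ * nsq (u ℓ)))

/-- The matrix `Q = Σ_ℓ q_ℓ u_ℓ u_ℓ* + q_0 I` built from `q ∈ ℝ^{L+1}`. -/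
def Qof (u : Fin L → Fin N → ℂ) (q : Fin (L+1) → ℝ) : Matrix (Fin N) (Fin N) ℂ :=
  (∑ ℓ, ((q ℓ.succ : ℝ) : ℂ) • outer (u ℓ)) + ((q 0 : ℝ) : ℂ) • 1

/-- Frobenius norm `‖M‖_F = (Tr(M*M))^{1/2}`. -/
def frob (M : Matrix (Fin N) (Fin N) ℂ) : ℝ := Real.sqrt ((Mᴴ * M).trace.re)

/-- The gradient matrix `S(Q) = Σ_ℓ [1/λ_ℓ(Q) − y_ℓ/λ_ℓ(Q)²] u_ℓ u_ℓ* + μ I`. -/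
def Smat (u : Fin L → Fin N → ℂ) (y : Fin L → ℝ) (γ μ : ℝ)
    (Q : Matrix (Fin N) (Fin N) ℂ) : Matrix (Fin N) (Fin N) ℂ :=
  (∑ ℓ, (((lam u γ Q ℓ)⁻¹ - y ℓ / (lam u γ Q ℓ) ^ 2 : ℝ) : ℂ) • outer (u ℓ))
    + ((μ : ℝ) : ℂ) • 1

/-- The gradient `∇f(z)`: component `0` is `μ`, component `ℓ ≥ 1` is
`1/(z_ℓ + γ⁻¹‖u_ℓ‖²) − y_ℓ/(z_ℓ + γ⁻¹‖u_ℓ‖²)²`. -/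
def gradf (u : Fin L → Fin N → ℂ) (y : Fin L → ℝ) (γ μ : ℝ) (z : Fin (L+1) → ℝ) :
    Fin (L+1) → ℝ :=
  Fin.cases μ
    (fun ℓ => (z ℓ.succ + γ⁻¹ * nsq (u ℓ))⁻¹ - y ℓ / (z ℓ.succ + γ⁻¹ * nsq (u ℓ)) ^ 2)

lemma log_add_div_le {c t t' y : ℝ} (hc : 0 < c) (ht : c ≤ t) (ht' : c ≤ t') (hy : 0 ≤ y) :
    Real.log t' + y / t' ≤
      Real.log t + y / t + (t⁻¹ - y / t ^ 2) * (t' - t) + y / c ^ 3 * (t' - t) ^ 2 := by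
  have htpos : 0 < t := hc.trans_le ht
  have ht'pos : 0 < t' := hc.trans_le ht'
  have hlog : Real.log t' ≤ Real.log t + t⁻¹ * (t' - t) := by
    have h := Real.log_le_sub_one_of_pos (div_pos ht'pos htpos)
    rw [Real.log_div ht'pos.ne' htpos.ne'] at h
    have e : t' / t - 1 = t⁻¹ * (t' - t) := by field_simp
    linarith
  have hrem : y / t' - y / t + y / t ^ 2 * (t' - t) = y * (t' - t) ^ 2 / (t ^ 2 * t') := by
    field_simp; ring
  have hc3 : c ^ 3 ≤ t ^ 2 * t' := by
    calc c ^ 3 = c ^ 2 * c := by ring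
      _ ≤ t ^ 2 * t' := by gcongr
  have hbound : y * (t' - t) ^ 2 / (t ^ 2 * t') ≤ y / c ^ 3 * (t' - t) ^ 2 := by
    rw [div_mul_eq_mul_div]
    exact div_le_div_of_nonneg_left (by positivity) (by positivity) hc3
  linarith

section Projection

variable {F : Type*} [NormedAddCommGroup F] [InnerProductSpace ℝ F]

lemma mul_inner_le_neg_norm_sq_of_isMinOn {K : Set F} (hK : Convex ℝ K) {x x' g : F} {α : ℝ}
    (hx : x ∈ K) (hx' : x' ∈ K) (hmin : IsMinOn (fun w => ‖w - (x - α • g)‖) K x') :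
    α * inner ℝ g (x' - x) ≤ -‖x' - x‖ ^ 2 := by
  have : Nonempty K := ⟨⟨x, hx⟩⟩
  have hinf : ‖x - α • g - x'‖ = ⨅ w : K, ‖x - α • g - w‖ := by
    refine le_antisymm (le_ciInf fun w => ?_) (ciInf_le ⟨0, ?_⟩ (⟨x', hx'⟩ : K))
    · simpa only [norm_sub_rev (x - α • g)] using isMinOn_iff.mp hmin w w.2
    · rintro _ ⟨w, rfl⟩
      exact norm_nonneg _
  have h := (norm_eq_iInf_iff_real_inner_le_zero hK hx').mp hinf x hx
  rw [show x - α • g - x' = -(x' - x) - α • g by abel, show x - x' = -(x' - x) by abel,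
    inner_sub_left, inner_neg_neg, real_inner_self_eq_norm_sq, inner_neg_right,
    real_inner_smul_left] at h
  linarith

lemma le_of_isMinOn_of_le_add_inner_add_sq {K : Set F} (hK : Convex ℝ K) {x x' g : F}
    {α C f f' : ℝ} (hx : x ∈ K) (hx' : x' ∈ K) (hα : 0 < α) (hαC : α * C ≤ 1)
    (hmin : IsMinOn (fun w => ‖w - (x - α • g)‖) K x')
    (hf : f' ≤ f + inner ℝ g (x' - x) + C * ‖x' - x‖ ^ 2) : f' ≤ f := by
  have hstep := mul_inner_le_neg_norm_sq_of_isMinOn hK hx hx' hmin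
  have hscaled : α * (f' - f) ≤ (α * C - 1) * ‖x' - x‖ ^ 2 := by
    linarith [mul_le_mul_of_nonneg_left hf hα.le]
  have hnonpos : (α * C - 1) * ‖x' - x‖ ^ 2 ≤ 0 :=
    mul_nonpos_of_nonpos_of_nonneg (by linarith) (sq_nonneg _)
  exact sub_nonpos.mp (nonpos_of_mul_nonpos_right (hscaled.trans hnonpos) hα)

end Projection

lemma convex_setOf_posSemidef {n : Type*} [Fintype n] :
    Convex ℝ {M : Matrix n n ℂ | M.PosSemidef} :=
  fun _ hA _ hB _ _ ha hb _ => (hA.smul ha).add (hB.smul hb)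

section Frobenius

variable {m n : Type*}

def frobEquiv : Matrix m n ℂ ≃ₗ[ℝ] EuclideanSpace ℂ (m × n) :=
  (Matrix.ofLinearEquiv ℝ).symm ≪≫ₗ (LinearEquiv.curry ℝ ℂ m n).symm ≪≫ₗ
    (WithLp.linearEquiv 2 ℝ (m × n → ℂ)).symm

lemma frobEquiv_apply (M : Matrix m n ℂ) (p : m × n) : frobEquiv M p = M p.1 p.2 := rfl

lemma real_inner_frobEquiv [Fintype m] [Fintype n] (A B : Matrix m n ℂ) :
    inner ℝ (frobEquiv A) (frobEquiv B) = (Aᴴ * B).trace.re := by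
  rw [PiLp.inner_apply, Fintype.sum_prod_type, Finset.sum_comm]
  simp only [trace, diag_apply, mul_apply, conjTranspose_apply, Complex.re_sum,
    frobEquiv_apply, Complex.inner, Complex.star_def, mul_comm]

end Frobenius

lemma nsq_nonneg (v : Fin N → ℂ) : 0 ≤ nsq v :=
  Finset.sum_nonneg fun _ _ => Complex.normSq_nonneg _

lemma nsq_pos {v : Fin N → ℂ} (hv : v ≠ 0) : 0 < nsq v := by
  obtain ⟨i, hi⟩ := Function.ne_iff.mp hv
  exact Finset.sum_pos' (fun j _ => Complex.normSq_nonneg _)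
    ⟨i, Finset.mem_univ i, Complex.normSq_pos.mpr hi⟩

lemma star_dotProduct_self (v : Fin N → ℂ) : star v ⬝ᵥ v = (nsq v : ℂ) := by
  simp [dotProduct, nsq, Complex.normSq_eq_conj_mul_self, mul_comm]

lemma frob_eq_norm (M : Matrix (Fin N) (Fin N) ℂ) : frob M = ‖frobEquiv M‖ := by
  rw [frob, ← real_inner_frobEquiv, real_inner_self_eq_norm_sq, Real.sqrt_sq (norm_nonneg _)]

lemma real_inner_frobEquiv_one (M : Matrix (Fin N) (Fin N) ℂ) :
    inner ℝ (frobEquiv (1 : Matrix (Fin N) (Fin N) ℂ)) (frobEquiv M) = M.trace.re := by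
  simp [real_inner_frobEquiv]

lemma real_inner_frobEquiv_outer (v : Fin N → ℂ) (M : Matrix (Fin N) (Fin N) ℂ) :
    inner ℝ (frobEquiv (outer v)) (frobEquiv M) = (star v ⬝ᵥ (M *ᵥ v)).re := by
  rw [real_inner_frobEquiv, outer, conjTranspose_vecMulVec, star_star, vecMulVec_mul,
    trace_vecMulVec, dotProduct_comm, dotProduct_mulVec]

lemma norm_frobEquiv_outer (v : Fin N → ℂ) : ‖frobEquiv (outer v)‖ = nsq v := by
  have hsq : ‖frobEquiv (outer v)‖ ^ 2 = nsq v ^ 2 := by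
    rw [← real_inner_self_eq_norm_sq, real_inner_frobEquiv_outer, outer, vecMulVec_mulVec,
      star_dotProduct_self, dotProduct_smul, MulOpposite.smul_eq_mul_unop, MulOpposite.unop_op,
      star_dotProduct_self, ← Complex.ofReal_mul, Complex.ofReal_re, sq]
  exact (pow_left_inj₀ (norm_nonneg _) (nsq_nonneg v) two_ne_zero).mp hsq

section Objective

variable (u : Fin L → Fin N → ℂ) (y : Fin L → ℝ) (γ μ : ℝ)

lemma lam_eq_inner_add (Q : Matrix (Fin N) (Fin N) ℂ) (ℓ : Fin L) :
    lam u γ Q ℓ = inner ℝ (frobEquiv (outer (u ℓ))) (frobEquiv Q) + γ⁻¹ * nsq (u ℓ) := by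
  rw [lam, real_inner_frobEquiv_outer, add_mulVec, dotProduct_add, Complex.add_re,
    smul_mulVec, one_mulVec, dotProduct_smul, star_dotProduct_self, smul_eq_mul,
    ← Complex.ofReal_inv, ← Complex.ofReal_mul, Complex.ofReal_re]

lemma lam_sub_lam (Q Q' : Matrix (Fin N) (Fin N) ℂ) (ℓ : Fin L) :
    lam u γ Q' ℓ - lam u γ Q ℓ = inner ℝ (frobEquiv (outer (u ℓ))) (frobEquiv (Q' - Q)) := by
  rw [lam_eq_inner_add, lam_eq_inner_add, map_sub, inner_sub_right]
  ring

lemma le_lam {Q : Matrix (Fin N) (Fin N) ℂ} (hQ : Q.PosSemidef) (ℓ : Fin L) :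
    γ⁻¹ * nsq (u ℓ) ≤ lam u γ Q ℓ := by
  rw [lam_eq_inner_add, real_inner_frobEquiv_outer, le_add_iff_nonneg_left]
  exact (Complex.le_def.mp (hQ.dotProduct_mulVec_nonneg (u ℓ))).1

lemma sq_lam_sub_lam_le (Q Q' : Matrix (Fin N) (Fin N) ℂ) (ℓ : Fin L) :
    (lam u γ Q' ℓ - lam u γ Q ℓ) ^ 2 ≤ nsq (u ℓ) ^ 2 * ‖frobEquiv (Q' - Q)‖ ^ 2 := by
  rw [lam_sub_lam, ← mul_pow, ← norm_frobEquiv_outer, ← sq_abs]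
  exact pow_le_pow_left₀ (abs_nonneg _) (abs_real_inner_le_norm _ _) 2

lemma real_inner_Smat (Q Q' : Matrix (Fin N) (Fin N) ℂ) :
    inner ℝ (frobEquiv (Smat u y γ μ Q)) (frobEquiv (Q' - Q)) =
      ∑ ℓ, ((lam u γ Q ℓ)⁻¹ - y ℓ / lam u γ Q ℓ ^ 2) * (lam u γ Q' ℓ - lam u γ Q ℓ)
        + μ * (Q'.trace.re - Q.trace.re) := by
  simp only [Smat, Complex.coe_smul, map_add, map_sum, map_smul, inner_add_left, sum_inner,
    real_inner_smul_left, lam_sub_lam, real_inner_frobEquiv_one, trace_sub, Complex.sub_re]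

def curvatureBound : ℝ := ∑ ℓ, y ℓ / (γ⁻¹ * nsq (u ℓ)) ^ 3 * nsq (u ℓ) ^ 2

lemma curvatureBound_nonneg (hy : ∀ ℓ, 0 ≤ y ℓ) (hγ : 0 < γ) : 0 ≤ curvatureBound u y γ :=
  Finset.sum_nonneg fun ℓ _ => by
    have := hy ℓ
    have := nsq_nonneg (u ℓ)
    positivity

lemma Jmu_le_add_inner_add_sq (hu : ∀ ℓ, u ℓ ≠ 0) (hy : ∀ ℓ, 0 ≤ y ℓ) (hγ : 0 < γ)
    {Q Q' : Matrix (Fin N) (Fin N) ℂ} (hQ : Q.PosSemidef) (hQ' : Q'.PosSemidef) :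
    Jmu u y γ μ Q' ≤ Jmu u y γ μ Q + inner ℝ (frobEquiv (Smat u y γ μ Q)) (frobEquiv (Q' - Q))
      + curvatureBound u y γ * ‖frobEquiv (Q' - Q)‖ ^ 2 := by
  set d := ‖frobEquiv (Q' - Q)‖ ^ 2
  have hterm : ∀ ℓ, Real.log (lam u γ Q' ℓ) + y ℓ / lam u γ Q' ℓ ≤
      Real.log (lam u γ Q ℓ) + y ℓ / lam u γ Q ℓ
        + ((lam u γ Q ℓ)⁻¹ - y ℓ / lam u γ Q ℓ ^ 2) * (lam u γ Q' ℓ - lam u γ Q ℓ)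
        + y ℓ / (γ⁻¹ * nsq (u ℓ)) ^ 3 * nsq (u ℓ) ^ 2 * d := by
    intro ℓ
    have hc : 0 < γ⁻¹ * nsq (u ℓ) := mul_pos (inv_pos.mpr hγ) (nsq_pos (hu ℓ))
    refine (log_add_div_le hc (le_lam u γ hQ ℓ) (le_lam u γ hQ' ℓ) (hy ℓ)).trans ?_
    rw [mul_assoc]
    gcongr
    · exact div_nonneg (hy ℓ) (pow_nonneg hc.le 3)
    · exact sq_lam_sub_lam_le u γ Q Q' ℓ
  have hsum := Finset.sum_le_sum fun ℓ (_ : ℓ ∈ Finset.univ) => hterm ℓ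
  simp only [Finset.sum_add_distrib, ← Finset.sum_mul] at hsum
  rw [Jmu, Jmu, real_inner_Smat, curvatureBound, Finset.sum_add_distrib, Finset.sum_add_distrib]
  linarith

end Objective

theorem stmt6_general (N L : ℕ)
    (u : Fin L → Fin N → ℂ) (hu : ∀ ℓ, u ℓ ≠ 0)
    (y : Fin L → ℝ) (hy : ∀ ℓ, 0 ≤ y ℓ)
    (γ : ℝ) (hγ : 0 < γ) (μ : ℝ) :
    ∃ αbar : ℝ, 0 < αbar ∧
      ∀ (Q : ℕ → Matrix (Fin N) (Fin N) ℂ) (α : ℕ → ℝ),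
        (∀ k, (Q k).PosSemidef) →
        (∀ k, 0 < α k ∧ α k < αbar) →
        (∀ k, ∀ Q' : Matrix (Fin N) (Fin N) ℂ, Q'.PosSemidef →
          frob (Q (k+1) - (Q k - α k • Smat u y γ μ (Q k)))
            ≤ frob (Q' - (Q k - α k • Smat u y γ μ (Q k)))) →
        ∀ k, Jmu u y γ μ (Q (k+1)) ≤ Jmu u y γ μ (Q k) := by
  have hC := curvatureBound_nonneg u y γ hy hγ
  refine ⟨1 / (curvatureBound u y γ + 1), by positivity, fun Q α hQ hα hmin k => ?_⟩
  obtain ⟨hα0, hαbar⟩ := hα k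
  have hαC : α k * curvatureBound u y γ ≤ 1 := by
    linarith [(lt_div_iff₀ (by positivity)).mp hαbar]
  have hdesc := Jmu_le_add_inner_add_sq u y γ μ hu hy hγ (hQ k) (hQ (k+1))
  rw [map_sub] at hdesc
  have hK : Convex ℝ ((frobEquiv : Matrix (Fin N) (Fin N) ℂ ≃ₗ[ℝ] _) '' {M | M.PosSemidef}) :=
    convex_setOf_posSemidef.linear_image frobEquiv.toLinearMap
  refine le_of_isMinOn_of_le_add_inner_add_sq hK (Set.mem_image_of_mem _ (hQ k))
    (Set.mem_image_of_mem _ (hQ (k+1))) hα0 hαC (isMinOn_iff.mpr ?_) hdesc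
  rintro _ ⟨Q', hQ', rfl⟩
  simpa only [frob_eq_norm, map_sub, map_smul] using hmin k Q' hQ'

/-- Proposition 1: there is a minimum step size `ᾱ > 0` such that for
any sequence of Hermitian PSD matrices `Q_k` and step sizes `α_k ∈ (0, ᾱ)` in which
`Q_{k+1}` minimizes `‖Q − (Q_k − α_k S(Q_k))‖_F` over PSD `Q`, the objective values
`J_μ(Q_k)` are monotonically nonincreasing. -/
theorem stmt6 (N L : ℕ) (hN : 0 < N) (hL : 0 < L)
    (u : Fin L → Fin N → ℂ) (hu : ∀ ℓ, u ℓ ≠ 0)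
    (y : Fin L → ℝ) (hy : ∀ ℓ, 0 ≤ y ℓ)
    (γ : ℝ) (hγ : 0 < γ) (μ : ℝ) (hμ : 0 ≤ μ) :
    ∃ αbar : ℝ, 0 < αbar ∧
      ∀ (Q : ℕ → Matrix (Fin N) (Fin N) ℂ) (α : ℕ → ℝ),
        (∀ k, (Q k).PosSemidef) →
        (∀ k, 0 < α k ∧ α k < αbar) →
        (∀ k, ∀ Q' : Matrix (Fin N) (Fin N) ℂ, Q'.PosSemidef →
          frob (Q (k+1) - (Q k - α k • Smat u y γ μ (Q k)))
            ≤ frob (Q' - (Q k - α k • Smat u y γ μ (Q k)))) →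
        ∀ k, Jmu u y γ μ (Q (k+1)) ≤ Jmu u y γ μ (Q k) :=
  stmt6_general N L u hu y hy γ hγ μ

end MmW
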